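/- D_B(f_1,...,f_r) equals secat_B(Π̃_{r,Y}), where Π̃_{r,Y} : P_B(f_1,...,f_r) → X is the pullback along (f_1,...,f_r) : X → Y_B^r of the fibrewise evaluation fibration Π_{r,Y} : P_B(Y) → Y_B^r. -/

import Mathlib

/-!
Both invariants are infima over open covers, and for each open `U ⊆ X` the two conditions on `U`
coincide. If `f_1|U, …, f_r|U` are pairwise fibrewise homotopic, concatenating the homotopies
gives, continuously in `x ∈ U`, a path in the fibre passing through `f_i(x)` at time
`i/(r-1)`: a strict section of the pullback. Conversely, a section `x ↦ (x', γ_x)` with `x'`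
fibrewise homotopic to `x` connects `f_a(x)` to `f_a(x') = γ_x(a/(r-1))`, then along `γ_x` to
`γ_x(b/(r-1)) = f_b(x')`, and back to `f_b(x)`.
-/

open Set

/-- Two continuous maps are fibrewise homotopic over `B`: there is a homotopy
whose every time-slice commutes with the projections to `B`. -/
def FibHomotopic {B X Y : Type*} [TopologicalSpace B] [TopologicalSpace X] [TopologicalSpace Y]
    (pX : X → B) (pY : Y → B) (f g : C(X, Y)) : Prop :=
  ∃ H : f.Homotopy g, ∀ (x : X) (t : unitInterval), pY (H (t, x)) = pX x

/-- Sequential parametrized homotopic distance of a family of fibrewise maps: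
the least `n` such that `X` admits an open cover by `n + 1` open sets on each of
which all the maps are pairwise fibrewise homotopic (`∞` if none exists). -/
noncomputable def fibDist {B X Y ι : Type*} [TopologicalSpace B] [TopologicalSpace X]
    [TopologicalSpace Y] (pX : X → B) (pY : Y → B) (f : ι → C(X, Y)) : ℕ∞ :=
  sInf {n : ℕ∞ | ∃ k : ℕ, (k : ℕ∞) = n ∧ ∃ U : Fin (k + 1) → Set X,
    (∀ i, IsOpen (U i)) ∧ (⋃ i, U i) = Set.univ ∧
    ∀ i s t, FibHomotopic (fun x : U i => pX (x : X)) pY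
      ((f s).restrict (U i)) ((f t).restrict (U i))}

/-- Fibrewise sectional category of a fibrewise map `f : E → X` over `B`: the least `k`
such that `X` has an open cover by `k + 1` open sets, each admitting a fibrewise map
`s : U → E` with `f ∘ s` fibrewise homotopic to the inclusion. -/
noncomputable def fibSecat {B E X : Type*} [TopologicalSpace B] [TopologicalSpace E]
    [TopologicalSpace X] (pE : E → B) (pX : X → B) (f : C(E, X)) : ℕ∞ :=
  sInf {n : ℕ∞ | ∃ k : ℕ, (k : ℕ∞) = n ∧ ∃ U : Fin (k + 1) → Set X,
    (∀ i, IsOpen (U i)) ∧ (⋃ i, U i) = Set.univ ∧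
    ∀ i, ∃ s : C(U i, E), (∀ x : U i, pE (s x) = pX (x : X)) ∧
      FibHomotopic (fun x : U i => pX (x : X)) pX (f.comp s)
        ⟨Subtype.val, continuous_subtype_val⟩}

/-- The fibrewise free path space of `Y` over `B`: pairs `(b, γ)` with `p_Y ∘ γ`
constant at `b`. -/
abbrev FibPathSpace {B Y : Type*} [TopologicalSpace B] [TopologicalSpace Y] (pY : Y → B) :
    Type _ := {z : B × C(unitInterval, Y) // ∀ t, pY (z.2 t) = z.1}

/-- The `r`-fold fibred product of `Y` over `B`. -/
abbrev FibPow {B Y : Type*} [TopologicalSpace B] [TopologicalSpace Y] (pY : Y → B) (r : ℕ) :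
    Type _ := {v : Fin r → Y // ∀ i j, pY (v i) = pY (v j)}

/-- The time `i / (r - 1)` in the unit interval. -/
noncomputable def evalTime (r : ℕ) (i : Fin r) : unitInterval :=
  ⟨(i : ℝ) / ((r : ℝ) - 1), by
    have h1 : 1 ≤ r := Nat.one_le_iff_ne_zero.mpr (by rintro rfl; exact i.elim0)
    have h0 : (0:ℝ) ≤ (r:ℝ) - 1 := by
      have : (1:ℝ) ≤ (r:ℝ) := by exact_mod_cast h1
      linarith
    have hi : (i:ℝ) ≤ (r:ℝ) - 1 := by
      have h2 : ((i:ℕ):ℝ) ≤ ((r - 1 : ℕ):ℝ) := Nat.cast_le.mpr (by omega)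
      rwa [Nat.cast_sub h1, Nat.cast_one] at h2
    exact ⟨div_nonneg (by positivity) h0, div_le_one_of_le₀ hi h0⟩⟩

/-- The fibrewise evaluation fibration `Π_{r,Y} : P_B(Y) → Y_B^r`, sending `(b, γ)` to
`(γ(0), γ(1/(r-1)), …, γ(1))`. -/
noncomputable def fibPi {B Y : Type*} [TopologicalSpace B] [TopologicalSpace Y] (pY : Y → B)
    (r : ℕ) : C(FibPathSpace pY, FibPow pY r) :=
  ⟨fun z => ⟨fun i => z.1.2 (evalTime r i),
      fun i j => (z.2 (evalTime r i)).trans (z.2 (evalTime r j)).symm⟩, by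
    apply Continuous.subtype_mk
    exact continuous_pi fun i =>
      (continuous_eval_const (evalTime r i)).comp
        (continuous_snd.comp continuous_subtype_val)⟩

/-- The `i`-th projection `Y_B^r → Y`. -/
def fibPrj {B Y : Type*} [TopologicalSpace B] [TopologicalSpace Y] (pY : Y → B) (r : ℕ)
    (i : Fin r) : C(FibPow pY r, Y) :=
  ⟨fun v => v.1 i, ((continuous_apply i).comp continuous_subtype_val)⟩

open unitInterval

instance unitInterval.instPathConnectedSpace : PathConnectedSpace I :=
  isPathConnected_iff_pathConnectedSpace.mp
    ((convex_Icc (0 : ℝ) 1).isPathConnected ⟨0, by simp⟩)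

section FibHomotopic

variable {B X Y Z : Type*} [TopologicalSpace B] [TopologicalSpace X] [TopologicalSpace Y]
  [TopologicalSpace Z] {pX : X → B} {pY : Y → B} {pZ : Z → B}

theorem fibHomotopic_iff_homotopicWith {f g : C(X, Y)} :
    FibHomotopic pX pY f g ↔ f.HomotopicWith g fun h => ∀ x, pY (h x) = pX x :=
  ⟨fun ⟨H, hH⟩ => ⟨⟨H, fun t x => hH x t⟩⟩,
    fun ⟨H⟩ => ⟨H.toHomotopy, fun x t => H.prop t x⟩⟩

theorem FibHomotopic.refl {f : C(X, Y)} (hf : ∀ x, pY (f x) = pX x) :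
    FibHomotopic pX pY f f :=
  fibHomotopic_iff_homotopicWith.mpr (.refl f hf)

theorem FibHomotopic.symm {f g : C(X, Y)} (h : FibHomotopic pX pY f g) :
    FibHomotopic pX pY g f :=
  fibHomotopic_iff_homotopicWith.mpr (fibHomotopic_iff_homotopicWith.mp h).symm

theorem FibHomotopic.trans {f g h : C(X, Y)} (hfg : FibHomotopic pX pY f g)
    (hgh : FibHomotopic pX pY g h) : FibHomotopic pX pY f h :=
  fibHomotopic_iff_homotopicWith.mpr
    ((fibHomotopic_iff_homotopicWith.mp hfg).trans (fibHomotopic_iff_homotopicWith.mp hgh))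

theorem FibHomotopic.comp_left {f g : C(X, Y)} (h : FibHomotopic pX pY f g) (k : C(Y, Z))
    (hk : ∀ y, pZ (k y) = pY y) : FibHomotopic pX pZ (k.comp f) (k.comp g) := by
  obtain ⟨H, hH⟩ := h
  exact ⟨(ContinuousMap.Homotopy.refl k).comp H, fun x t => (hk _).trans (hH x t)⟩

theorem fibHomotopic_of_eq_path (γ : C(X, C(I, Y))) (hγ : ∀ x t, pY (γ x t) = pX x)
    {a b : I} {f g : C(X, Y)} (hf : ∀ x, f x = γ x a) (hg : ∀ x, g x = γ x b) :
    FibHomotopic pX pY f g := by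
  let p := (PathConnectedSpace.joined a b).somePath
  refine ⟨⟨⟨fun tx => γ tx.2 (p tx.1), by fun_prop⟩, fun x => ?_, fun x => ?_⟩,
    fun x t => hγ x _⟩
  · simp [hf]
  · simp [hg]

end FibHomotopic

section Chain

variable {B U Y : Type*} [TopologicalSpace B] [TopologicalSpace U] [TopologicalSpace Y]
  {pU : U → B} {pY : Y → B}

-- Parametrising by `ℝ` lets the induction glue on one more homotopy along `s = m`.
theorem exists_fibrewise_path_through :
    ∀ (m : ℕ) (g : Fin (m + 1) → C(U, Y)), (∀ k x, pY (g k x) = pU x) →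
      (∀ k : Fin m, FibHomotopic pU pY (g k.castSucc) (g k.succ)) →
      ∃ G : C(U × ℝ, Y), (∀ x s, pY (G (x, s)) = pU x) ∧
        ∀ (k : Fin (m + 1)) x, G (x, (k : ℕ)) = g k x
  | 0, g, hg, _ =>
    ⟨(g 0).comp .fst, fun x _ => hg 0 x, fun k x => by rw [Fin.fin_one_eq_zero k]; rfl⟩
  | m + 1, g, hg, hchain => by
    obtain ⟨G, hGp, hGg⟩ := exists_fibrewise_path_through m (g ∘ Fin.castSucc)
      (fun k => hg _) (fun k => hchain k.castSucc)
    obtain ⟨H, hHp⟩ := hchain (Fin.last m)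
    let G' : C(U × ℝ, Y) :=
      ⟨fun xs => if xs.2 ≤ m then G xs else H (projIcc 0 1 zero_le_one (xs.2 - m), xs.1), by
        refine Continuous.if_le G.continuous (by fun_prop) continuous_snd continuous_const ?_
        rintro ⟨x, s⟩ (rfl : s = m)
        simpa using hGg (Fin.last m) x⟩
    refine ⟨G', fun x s => ?_, fun k x => ?_⟩
    · simp only [G', ContinuousMap.coe_mk]
      split_ifs
      exacts [hGp x s, hHp x _]
    · induction k using Fin.lastCases with
      | last => simp [G', ← Fin.succ_last]
      | cast k => simpa [G', k.is_le] using hGg k x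

end Chain

theorem evalTime_mul (m : ℕ) (i : Fin (m + 1)) : (evalTime (m + 1) i : ℝ) * m = i := by
  rcases eq_or_ne m 0 with rfl | hm
  · simp [Fin.fin_one_eq_zero i]
  · simp [evalTime, hm]

section Pullback

variable {B X Y : Type*} [TopologicalSpace B] [TopologicalSpace X] [TopologicalSpace Y]
  {r : ℕ} {pX : X → B} {pY : Y → B}

/-- `P_B(f_1,…,f_r)`, the pullback of `fibPi pY r` along `(f_1,…,f_r) : X → Y_B^r`. -/
abbrev EvalPullback (pY : Y → B) (f : Fin r → C(X, Y)) : Type _ :=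
  {w : X × FibPathSpace pY // ∀ i : Fin r, f i w.1 = w.2.1.2 (evalTime r i)}

def EvalPullback.proj (pY : Y → B) (f : Fin r → C(X, Y)) : C(EvalPullback pY f, X) :=
  ⟨fun w => w.1.1, continuous_fst.comp continuous_subtype_val⟩

theorem exists_section_of_pairwise_fibHomotopic (hr : r ≠ 0) (hpX : Continuous pX)
    {f : Fin r → C(X, Y)} (hf : ∀ i x, pY (f i x) = pX x) {U : Set X}
    (hU : ∀ a b, FibHomotopic (fun x : U => pX x) pY ((f a).restrict U) ((f b).restrict U)) :
    ∃ s : C(U, EvalPullback pY f), ∀ x, (s x).1.1 = x := by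
  obtain ⟨m, rfl⟩ := Nat.exists_eq_succ_of_ne_zero hr
  obtain ⟨G, hGp, hGf⟩ := exists_fibrewise_path_through m (fun k => (f k).restrict U)
    (fun k x => hf k x) (fun k => hU _ _)
  let Γ : C(U, C(I, Y)) := (G.comp ⟨fun xt => (xt.1, xt.2 * m), by fun_prop⟩).curry
  refine ⟨⟨fun x => ⟨(x, ⟨(pX x, Γ x), fun t => hGp _ _⟩), fun i => ?_⟩, by fun_prop⟩,
    fun x => rfl⟩
  simp [Γ, evalTime_mul, hGf]

theorem fibHomotopic_of_section {f : Fin r → C(X, Y)} (hf : ∀ i x, pY (f i x) = pX x)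
    {U : Set X} (s : C(U, EvalPullback pY f)) (hs : ∀ x, pX (s x).1.1 = pX x)
    (hH : FibHomotopic (fun x : U => pX x) pX ((EvalPullback.proj pY f).comp s)
      ⟨Subtype.val, continuous_subtype_val⟩) (a b : Fin r) :
    FibHomotopic (fun x : U => pX x) pY ((f a).restrict U) ((f b).restrict U) := by
  let γ : C(U, C(I, Y)) := ⟨fun x => (s x).1.2.1.2, by fun_prop⟩
  have hγ : ∀ x t, pY (γ x t) = pX x := fun x t => by
    change pY ((s x).1.2.1.2 t) = _
    rw [(s x).1.2.2, ← (s x).1.2.2 (evalTime r a), ← (s x).2 a, hf, hs]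
  set q := (EvalPullback.proj pY f).comp s
  have hab : FibHomotopic (fun x : U => pX x) pY ((f a).comp q) ((f b).comp q) :=
    fibHomotopic_of_eq_path γ hγ (fun x => (s x).2 a) fun x => (s x).2 b
  exact (hH.comp_left (f a) (hf a)).symm.trans (hab.trans (hH.comp_left (f b) (hf b)))

theorem pairwise_fibHomotopic_iff_exists_section (hr : r ≠ 0) (hpX : Continuous pX)
    {f : Fin r → C(X, Y)} (hf : ∀ i x, pY (f i x) = pX x) (U : Set X) :
    (∀ a b, FibHomotopic (fun x : U => pX x) pY ((f a).restrict U) ((f b).restrict U)) ↔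
      ∃ s : C(U, EvalPullback pY f), (∀ x, pX (s x).1.1 = pX x) ∧
        FibHomotopic (fun x : U => pX x) pX ((EvalPullback.proj pY f).comp s)
          ⟨Subtype.val, continuous_subtype_val⟩ := by
  refine ⟨fun hU => ?_, fun ⟨s, hs, hH⟩ => fibHomotopic_of_section hf s hs hH⟩
  obtain ⟨s, hs⟩ := exists_section_of_pairwise_fibHomotopic hr hpX hf hU
  have hproj : (EvalPullback.proj pY f).comp s = ⟨Subtype.val, continuous_subtype_val⟩ :=
    ContinuousMap.ext hs
  exact ⟨s, fun x => by rw [hs], hproj ▸ FibHomotopic.refl fun x => congrArg pX (hs x)⟩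

end Pullback

theorem stmt15_general {B X Y : Type*} [TopologicalSpace B] [TopologicalSpace X] [TopologicalSpace Y]
    (r : ℕ) (hr : 2 ≤ r) (pX : X → B) (pY : Y → B)
    (hpX : Continuous pX)
    (f : Fin r → C(X, Y)) (hf : ∀ i x, pY (f i x) = pX x) :
    fibDist pX pY f =
      fibSecat
        (fun w : {w : X × FibPathSpace pY //
            ∀ i : Fin r, f i w.1 = w.2.1.2 (evalTime r i)} => pX w.1.1)
        pX
        ⟨fun w => w.1.1, continuous_fst.comp continuous_subtype_val⟩ := by
  simp only [fibDist, fibSecat, pairwise_fibHomotopic_iff_exists_section (by omega) hpX hf]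
  rfl

/-- `D_B(f_1,…,f_r)` equals the fibrewise sectional category of the pullback
`Π̃_{r,Y} : P_B(f_1,…,f_r) → X` of the evaluation fibration `Π_{r,Y}` along `(f_1,…,f_r)`. -/
theorem stmt15 {B X Y : Type*} [TopologicalSpace B] [TopologicalSpace X] [TopologicalSpace Y]
    (r : ℕ) (hr : 2 ≤ r) (pX : X → B) (pY : Y → B)
    (hpX : Continuous pX) (hpY : Continuous pY)
    (f : Fin r → C(X, Y)) (hf : ∀ i x, pY (f i x) = pX x) :
    fibDist pX pY f =
      fibSecat
        (fun w : {w : X × FibPathSpace pY //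
            ∀ i : Fin r, f i w.1 = w.2.1.2 (evalTime r i)} => pX w.1.1)
        pX
        ⟨fun w => w.1.1, continuous_fst.comp continuous_subtype_val⟩ :=
  stmt15_general r hr pX pY hpX f hf
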